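/- For all a > 0 and λ > 0 one has ∫_0^∞ e^{-λt} e^{a²t} erfc(a√t) dt = 1/(√λ (√λ + a)). -/

import Mathlib

/-!
For `λ ≠ a²` the integrand `e^{(a²-λ)t} erfc(a√t)` has the explicit antiderivative
`G(t) = (e^{(a²-λ)t} erfc(a√t) - (a/√λ) erfc(√λ √t)) / (a² - λ)`,
which vanishes at infinity by the Gaussian tail bound `erfc u ≤ e^{-u²} / (u √π)`; so the
integral is `-G(0) = (a/√λ - 1) / (a² - λ) = 1 / (√λ (√λ + a))`. The singularity of `G`
at `λ = a²` is removable but not in closed form, so that case is done separately: the integrand is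
then `erfc(a√t)`, with antiderivative `(t - 1/(2a²)) erfc(a√t) - √t e^{-a²t} / (a√π)`.
-/

open Real Set MeasureTheory

/-- The complementary error function `erfc(u) = (2/√π) ∫_u^∞ e^{-z²} dz`. -/
noncomputable def erfc (u : ℝ) : ℝ :=
  (2 / Real.sqrt Real.pi) * ∫ z in Set.Ioi u, Real.exp (-z ^ 2)

open Filter Topology

lemma integrable_exp_neg_sq : Integrable fun z : ℝ => exp (-z ^ 2) := by
  simpa using integrable_exp_neg_mul_sq one_pos

lemma erfc_zero : erfc 0 = 1 := by
  have hhalf : ∫ z in Ioi (0 : ℝ), exp (-z ^ 2) = √π / 2 := by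
    simpa using integral_gaussian_Ioi 1
  have hpi : √π ≠ 0 := by positivity
  rw [erfc, hhalf]
  field_simp

lemma erfc_eq_one_sub_intervalIntegral (u : ℝ) :
    erfc u = 1 - 2 / √π * ∫ z in (0 : ℝ)..u, exp (-z ^ 2) := by
  rw [← erfc_zero, erfc, erfc, ← mul_sub, ← intervalIntegral.integral_Ioi_sub_Ioi'
    integrable_exp_neg_sq.integrableOn integrable_exp_neg_sq.integrableOn]
  ring

lemma hasDerivAt_erfc (u : ℝ) : HasDerivAt erfc (-(2 / √π * exp (-u ^ 2))) u := by
  rw [funext erfc_eq_one_sub_intervalIntegral]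
  exact (((continuous_exp.comp (by fun_prop)).integral_hasStrictDerivAt 0 u).hasDerivAt
    |>.const_mul _).const_sub 1

@[fun_prop]
lemma continuous_erfc : Continuous erfc :=
  continuous_iff_continuousAt.2 fun u => (hasDerivAt_erfc u).continuousAt

lemma erfc_nonneg (u : ℝ) : 0 ≤ erfc u :=
  mul_nonneg (by positivity) (setIntegral_nonneg measurableSet_Ioi fun _ _ => (exp_pos _).le)

lemma integral_Ioi_mul_exp_neg_sq (u : ℝ) :
    ∫ z in Ioi u, z * exp (-z ^ 2) = exp (-u ^ 2) / 2 := by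
  have hderiv (z : ℝ) : HasDerivAt (fun z : ℝ => -exp (-z ^ 2) / 2) (z * exp (-z ^ 2)) z := by
    refine ((((hasDerivAt_pow 2 z).fun_neg.exp).fun_neg).div_const 2).congr_deriv ?_
    simp only [Nat.cast_ofNat, pow_one, Nat.add_one_sub_one]
    ring
  have hlim : Tendsto (fun z : ℝ => -exp (-z ^ 2) / 2) atTop (𝓝 0) := by
    simpa using ((tendsto_exp_atBot.comp (tendsto_neg_atTop_atBot.comp
      (tendsto_pow_atTop two_ne_zero))).neg).div_const 2
  rw [integral_Ioi_of_hasDerivAt_of_tendsto' (fun z _ => hderiv z)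
    (by simpa using (integrable_mul_exp_neg_mul_sq one_pos).integrableOn) hlim]
  ring

-- The Gaussian tail bound: compare `e^{-z²}` with `(z / u) e^{-z²}` on `(u, ∞)`.
lemma erfc_le_exp_neg_sq_div {u : ℝ} (hu : 0 < u) :
    erfc u ≤ exp (-u ^ 2) / (u * √π) := by
  have htail : ∫ z in Ioi u, exp (-z ^ 2) ≤ ∫ z in Ioi u, z / u * exp (-z ^ 2) := by
    refine setIntegral_mono_on integrable_exp_neg_sq.integrableOn ?_ measurableSet_Ioi
      fun z hz => le_mul_of_one_le_left (exp_pos _).le ((one_le_div hu).2 (le_of_lt hz))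
    simpa [div_mul_eq_mul_div] using
      ((integrable_mul_exp_neg_mul_sq one_pos).div_const u).integrableOn
  have hval : ∫ z in Ioi u, z / u * exp (-z ^ 2) = exp (-u ^ 2) / (2 * u) := by
    simp_rw [div_mul_eq_mul_div]
    rw [integral_div, integral_Ioi_mul_exp_neg_sq, div_div]
  calc erfc u ≤ 2 / √π * (exp (-u ^ 2) / (2 * u)) :=
        hval ▸ mul_le_mul_of_nonneg_left htail (by positivity)
    _ = exp (-u ^ 2) / (u * √π) := by field_simp

lemma hasDerivAt_erfc_mul_sqrt (c : ℝ) {t : ℝ} (ht : 0 < t) :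
    HasDerivAt (fun τ => erfc (c * √τ)) (-(c * exp (-c ^ 2 * t)) / (√π * √t)) t := by
  refine ((hasDerivAt_erfc _).comp t ((hasDerivAt_sqrt ht.ne').const_mul c)).congr_deriv ?_
  have hst : √t ≠ 0 := (sqrt_pos.2 ht).ne'
  have hpi : √π ≠ 0 := by positivity
  rw [mul_pow, sq_sqrt ht.le]
  field_simp

lemma erfc_mul_sqrt_le {c t : ℝ} (hc : 0 < c) (ht : 0 < t) :
    erfc (c * √t) ≤ exp (-c ^ 2 * t) / (c * √π * √t) := by
  have h := erfc_le_exp_neg_sq_div (mul_pos hc (sqrt_pos.2 ht))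
  rwa [mul_pow, sq_sqrt ht.le, ← neg_mul, mul_right_comm] at h

lemma tendsto_exp_neg_mul_div_sqrt_atTop {b : ℝ} (hb : 0 < b) :
    Tendsto (fun t => exp (-b * t) / √t) atTop (𝓝 0) := by
  refine (tendsto_rpow_mul_exp_neg_mul_atTop_nhds_zero (-(1 / 2)) b hb).congr' ?_
  filter_upwards [eventually_gt_atTop 0] with t ht
  rw [rpow_neg ht.le, ← sqrt_eq_rpow, div_eq_inv_mul]

lemma tendsto_sqrt_mul_exp_neg_mul_atTop {b : ℝ} (hb : 0 < b) :
    Tendsto (fun t => √t * exp (-b * t)) atTop (𝓝 0) := by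
  refine (tendsto_rpow_mul_exp_neg_mul_atTop_nhds_zero (1 / 2) b hb).congr' ?_
  filter_upwards [eventually_ge_atTop 0] with t ht
  rw [← sqrt_eq_rpow]

lemma tendsto_mul_erfc_mul_sqrt_atTop {c : ℝ} (hc : 0 < c) {f : ℝ → ℝ}
    (hf : ∀ᶠ t in atTop, 0 ≤ f t)
    (hlim : Tendsto (fun t => f t * (exp (-c ^ 2 * t) / √t)) atTop (𝓝 0)) :
    Tendsto (fun t => f t * erfc (c * √t)) atTop (𝓝 0) := by
  have hbound := mul_zero (1 / (c * √π)) ▸ hlim.const_mul (1 / (c * √π))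
  refine squeeze_zero' (hf.mono fun t ht => mul_nonneg ht (erfc_nonneg _)) ?_ hbound
  filter_upwards [hf, eventually_gt_atTop 0] with t hft ht
  calc f t * erfc (c * √t) ≤ f t * (exp (-c ^ 2 * t) / (c * √π * √t)) :=
        mul_le_mul_of_nonneg_left (erfc_mul_sqrt_le hc ht) hft
    _ = 1 / (c * √π) * (f t * (exp (-c ^ 2 * t) / √t)) := by
        field_simp

lemma tendsto_erfc_mul_sqrt_atTop {c : ℝ} (hc : 0 < c) :
    Tendsto (fun t => erfc (c * √t)) atTop (𝓝 0) := by
  have h := tendsto_mul_erfc_mul_sqrt_atTop hc (f := fun _ => 1)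
    (.of_forall fun _ => zero_le_one) ?_
  · simpa only [one_mul] using h
  simpa only [one_mul] using tendsto_exp_neg_mul_div_sqrt_atTop (sq_pos_of_pos hc)

lemma tendsto_exp_mul_erfc_mul_sqrt_atTop {a lam : ℝ} (ha : 0 < a) (hlam : 0 < lam) :
    Tendsto (fun t => exp ((a ^ 2 - lam) * t) * erfc (a * √t)) atTop (𝓝 0) := by
  refine tendsto_mul_erfc_mul_sqrt_atTop ha (.of_forall fun _ => (exp_pos _).le) ?_
  refine (tendsto_exp_neg_mul_div_sqrt_atTop hlam).congr fun t => ?_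
  rw [mul_div_assoc', ← exp_add]
  ring_nf

lemma integral_erfc_mul_sqrt {a : ℝ} (ha : 0 < a) :
    ∫ t in Ioi (0 : ℝ), erfc (a * √t) = 1 / (2 * a ^ 2) := by
  set k := 1 / (2 * a ^ 2)
  set G : ℝ → ℝ := fun t => (t - k) * erfc (a * √t) - √t * exp (-a ^ 2 * t) / (a * √π)
  have hderiv : ∀ t ∈ Ioi (0 : ℝ), HasDerivAt G (erfc (a * √t)) t := by
    intro t (ht : 0 < t)
    have hexp : HasDerivAt (fun τ => exp (-a ^ 2 * τ)) (exp (-a ^ 2 * t) * -a ^ 2) t :=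
      ((hasDerivAt_id t).const_mul (-a ^ 2)).exp.congr_deriv (by simp)
    refine ((((hasDerivAt_id t).sub_const k).mul (hasDerivAt_erfc_mul_sqrt a ht)).sub
      (((hasDerivAt_sqrt ht.ne').mul hexp).div_const (a * √π))).congr_deriv ?_
    have hst : √t ≠ 0 := (sqrt_pos.2 ht).ne'
    have hpi : √π ≠ 0 := by positivity
    simp only [id, k, neg_mul]
    field_simp
    rw [sq_sqrt ht.le]
    ring
  have hlim : Tendsto G atTop (𝓝 0) := by
    have hfirst : Tendsto (fun t => (t - k) * erfc (a * √t)) atTop (𝓝 0) := by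
      refine tendsto_mul_erfc_mul_sqrt_atTop ha (eventually_ge_atTop k |>.mono fun t ht =>
        sub_nonneg.2 ht) ?_
      have h := (tendsto_sqrt_mul_exp_neg_mul_atTop (sq_pos_of_pos ha)).sub
        ((tendsto_exp_neg_mul_div_sqrt_atTop (sq_pos_of_pos ha)).const_mul k)
      rw [mul_zero, sub_zero] at h
      refine h.congr' ?_
      filter_upwards [eventually_gt_atTop 0] with t ht
      have hst : √t ≠ 0 := (sqrt_pos.2 ht).ne'
      field_simp
      rw [sq_sqrt ht.le]
    have h := hfirst.sub
      ((tendsto_sqrt_mul_exp_neg_mul_atTop (sq_pos_of_pos ha)).div_const (a * √π))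
    rwa [zero_div, sub_zero] at h
  rw [integral_Ioi_of_hasDerivAt_of_nonneg (by fun_prop : Continuous G).continuousWithinAt
    hderiv (fun _ _ => erfc_nonneg _) hlim]
  simp [G, erfc_zero]

lemma integral_exp_mul_erfc_mul_sqrt_of_ne {a lam : ℝ} (ha : 0 < a) (hlam : 0 < lam)
    (hne : lam ≠ a ^ 2) :
    ∫ t in Ioi (0 : ℝ), exp (-lam * t) * (exp (a ^ 2 * t) * erfc (a * √t))
      = 1 / (√lam * (√lam + a)) := by
  set s := √lam
  have hs : 0 < s := sqrt_pos.2 hlam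
  have hs2 : s ^ 2 = lam := sq_sqrt hlam.le
  have hd : a ^ 2 - lam ≠ 0 := sub_ne_zero.2 hne.symm
  set G : ℝ → ℝ := fun t =>
    (exp ((a ^ 2 - lam) * t) * erfc (a * √t) - a / s * erfc (s * √t)) / (a ^ 2 - lam)
  have hderiv : ∀ t ∈ Ioi (0 : ℝ),
      HasDerivAt G (exp (-lam * t) * (exp (a ^ 2 * t) * erfc (a * √t))) t := by
    intro t (ht : 0 < t)
    have hexp : HasDerivAt (fun τ => exp ((a ^ 2 - lam) * τ))
        (exp ((a ^ 2 - lam) * t) * (a ^ 2 - lam)) t :=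
      ((hasDerivAt_id t).const_mul (a ^ 2 - lam)).exp.congr_deriv (by simp)
    refine (((hexp.mul (hasDerivAt_erfc_mul_sqrt a ht)).sub
      ((hasDerivAt_erfc_mul_sqrt s ht).const_mul (a / s))).div_const (a ^ 2 - lam)).congr_deriv ?_
    have hst : √t ≠ 0 := (sqrt_pos.2 ht).ne'
    have hpi : √π ≠ 0 := by positivity
    have hA : exp ((a ^ 2 - lam) * t) * exp (-(a ^ 2 * t)) = exp (-(lam * t)) := by
      rw [← exp_add]; ring_nf
    have hB : exp (-(lam * t)) * exp (a ^ 2 * t) = exp ((a ^ 2 - lam) * t) := by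
      rw [← exp_add]; ring_nf
    rw [hs2]
    field_simp
    linear_combination (-a) * hA - ((a ^ 2 - lam) * √t * erfc (a * √t) * √π) * hB
  have hlim : Tendsto G atTop (𝓝 0) := by
    have h := ((tendsto_exp_mul_erfc_mul_sqrt_atTop ha hlam).sub
      ((tendsto_erfc_mul_sqrt_atTop hs).const_mul (a / s))).div_const (a ^ 2 - lam)
    rwa [mul_zero, sub_zero, zero_div] at h
  have hnonneg : ∀ t ∈ Ioi (0 : ℝ),
      0 ≤ exp (-lam * t) * (exp (a ^ 2 * t) * erfc (a * √t)) := fun t _ => by have := erfc_nonneg (a * √t); positivity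
  rw [integral_Ioi_of_hasDerivAt_of_nonneg (by fun_prop : Continuous G).continuousWithinAt
    hderiv hnonneg hlim]
  simp only [G, sqrt_zero, mul_zero, exp_zero, erfc_zero]
  rw [← hs2] at hd ⊢
  field_simp
  ring

/-- For all `a > 0` and `λ > 0` one has
`∫_0^∞ e^{-λt} e^{a²t} erfc(a√t) dt = 1/(√λ (√λ + a))`. -/
theorem laplace_transform_erfc (a lam : ℝ) (ha : 0 < a) (hlam : 0 < lam) :
    ∫ t in Set.Ioi (0 : ℝ), Real.exp (-lam * t) * (Real.exp (a ^ 2 * t) * erfc (a * Real.sqrt t))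
      = 1 / (Real.sqrt lam * (Real.sqrt lam + a)) := by
  rcases ne_or_eq lam (a ^ 2) with hne | rfl
  · exact integral_exp_mul_erfc_mul_sqrt_of_ne ha hlam hne
  · have hcancel (t : ℝ) : exp (-a ^ 2 * t) * (exp (a ^ 2 * t) * erfc (a * √t))
        = erfc (a * √t) := by
      rw [← mul_assoc, ← exp_add, neg_mul, neg_add_cancel, exp_zero, one_mul]
    simp only [hcancel, integral_erfc_mul_sqrt ha, sqrt_sq ha.le]
    ring
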